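/- arXiv:1901.07610 — 3 statements merged into one kernel-verified Lean document; each statement's English description precedes it below -/
import Mathlib

section
/- (Lemma 2) Let A be a complex (N+1)×N matrix each of whose columns sums to zero, partitioned into slack row a₀ᵀ and remaining N×N block Ã, and let Y_b be any N×N complex matrix. Fix V₀ ∈ ℂ, Ṽ ∈ ℂ^N, Ĩ ∈ ℂ^N, and let V ∈ ℂ^{N+1} have slack entry V₀ and remaining entries Ṽ. Then the equations of (A·Y_b·Aᵀ)·V = I indexed by the non-slack nodes (where I has non-slack entries Ĩ) hold if and only if there exists a vector I_b ∈ ℂ^N of branch currents satisfying Ã·I_b = Ĩ and Y_b·Ãᵀ·(Ṽ − V₀·1_N) = I_b; i.e., the load flow problem of a shunt-free network with constant-current loads is solved by a single backward and a single forward sweep. -/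
open Matrix Finset

/-- Lemma 2: For `A` with zero column sums, the non-slack equations of
`(A · Y_b · Aᵀ) · V = I` (with `V` having slack entry `V₀` and non-slack entries `Ṽ`,
`I` having non-slack entries `Ĩ`) hold iff there exists a vector of branch currents
`I_b` with `Ã · I_b = Ĩ` (backward sweep) and `Y_b · Ãᵀ · (Ṽ - V₀ · 1_N) = I_b`
(forward sweep); i.e., the shunt-free constant-current load flow is solved by a single
backward and a single forward sweep. -/
theorem loadflow_solved_by_single_bfs_iteration (N : ℕ)
    (A : Matrix (Fin (N + 1)) (Fin N) ℂ) (Yb : Matrix (Fin N) (Fin N) ℂ)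
    (hcol : ∀ j : Fin N, ∑ i : Fin (N + 1), A i j = 0)
    (V₀ : ℂ) (Vt It : Fin N → ℂ) :
    (∀ i : Fin N, ((A * Yb * Aᵀ) *ᵥ (Fin.cons V₀ Vt)) i.succ = It i) ↔
      ∃ Ib : Fin N → ℂ,
        (A.submatrix Fin.succ id) *ᵥ Ib = It ∧
        (Yb * (A.submatrix Fin.succ id)ᵀ) *ᵥ (Vt - V₀ • (fun _ => (1 : ℂ))) = Ib := by
  have hAT : Aᵀ *ᵥ (Fin.cons V₀ Vt) =
      (A.submatrix Fin.succ id)ᵀ *ᵥ (Vt - V₀ • (fun _ => (1 : ℂ))) := by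
    funext j
    have h0 : A 0 j = -∑ i : Fin N, A i.succ j := by
      have := hcol j
      rw [Fin.sum_univ_succ] at this
      linear_combination this
    simp only [mulVec, dotProduct, transpose_apply, submatrix_apply, id]
    rw [Fin.sum_univ_succ, Fin.cons_zero, h0]
    simp only [Fin.cons_succ, Pi.sub_apply, Pi.smul_apply, smul_eq_mul, mul_one,
      neg_mul, Finset.sum_mul, mul_sub]
    rw [Finset.sum_sub_distrib]
    ring
  have key : ∀ i : Fin N, ((A * Yb * Aᵀ) *ᵥ (Fin.cons V₀ Vt)) i.succ =
      ((A.submatrix Fin.succ id) *ᵥ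
        ((Yb * (A.submatrix Fin.succ id)ᵀ) *ᵥ (Vt - V₀ • (fun _ => (1 : ℂ))))) i := by
    intro i
    conv_rhs => rw [← mulVec_mulVec]
    rw [← mulVec_mulVec, hAT, ← mulVec_mulVec]
    simp [mulVec, dotProduct, submatrix_apply]
  constructor
  · intro h
    exact ⟨(Yb * (A.submatrix Fin.succ id)ᵀ) *ᵥ (Vt - V₀ • (fun _ => (1 : ℂ))),
      funext fun i => (key i).symm.trans (h i), rfl⟩
  · rintro ⟨Ib, hb, hf⟩ i
    rw [key i, hf, hb]
end

section
/- (Proposition 1, direct-approach form / D-HELM) Let A be a complex (N+1)×N matrix each of whose columns sums to zero, partitioned into slack row a₀ᵀ and remaining N×N block Ã, let Y_b be an N×N complex matrix with Ã·Y_b·Ãᵀ invertible, and set Y^s = A·Y_b·Aᵀ. Fix n ≥ 1, complex numbers S_i, y^{sh}_i, v_i[n−1], w_i[n−1] for each non-slack node i, and let I ∈ ℂ^N have entries I_i = conj(S_i)·conj(w_i[n−1]) − y^{sh}_i·v_i[n−1]. Suppose v[n] ∈ ℂ^{N+1} has slack entry v_0[n] = 0 and satisfies, for every non-slack i, Σ_{j=0}^{N}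 y^s_{ij}·v_j[n] = I_i. Then the vector ṽ[n] of non-slack entries of v[n] is uniquely determined and equals (Ã·Y_b·Ãᵀ)⁻¹·I; i.e., the HELM coefficient equations at step n are solved by a single iteration of the direct approach with DLF = (Ã·Y_b·Ãᵀ)⁻¹. -/
open Matrix Finset

/-- Proposition 1, direct-approach form / D-HELM: With `A` having zero
column sums, `Ã · Y_b · Ãᵀ` invertible, and `Y^s = A · Y_b · Aᵀ`, if `v[n]` has slack
entry `0` and satisfies the HELM coefficient equations at step `n ≥ 1` with right-hand
side `I_i = conj(S_i)·conj(w_i[n-1]) - y^{sh}_i·v_i[n-1]`, then its non-slack part is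
uniquely determined and equals `(Ã · Y_b · Ãᵀ)⁻¹ · I`: a single iteration of the
direct approach with `DLF = (Ã · Y_b · Ãᵀ)⁻¹`. -/
theorem helm_step_solved_by_direct_approach (N : ℕ)
    (A : Matrix (Fin (N + 1)) (Fin N) ℂ) (Yb : Matrix (Fin N) (Fin N) ℂ)
    (hcol : ∀ j : Fin N, ∑ i : Fin (N + 1), A i j = 0)
    (hinv : IsUnit (A.submatrix Fin.succ id * Yb * (A.submatrix Fin.succ id)ᵀ))
    (Ys : Matrix (Fin (N + 1)) (Fin (N + 1)) ℂ) (hYs : Ys = A * Yb * Aᵀ)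
    (n : ℕ) (hn : 1 ≤ n)
    (S ysh : Fin N → ℂ)
    (v : Fin (N + 1) → ℕ → ℂ) (w : Fin N → ℕ → ℂ)
    (I : Fin N → ℂ)
    (hI : ∀ i : Fin N,
      I i = (starRingEnd ℂ) (S i) * (starRingEnd ℂ) (w i (n - 1)) -
        ysh i * v i.succ (n - 1))
    (hslack : v 0 n = 0)
    (heq : ∀ i : Fin N, ∑ j : Fin (N + 1), Ys i.succ j * v j n = I i) :
    (fun i : Fin N => v i.succ n) =
      (A.submatrix Fin.succ id * Yb * (A.submatrix Fin.succ id)ᵀ)⁻¹ *ᵥ I := by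
  set M := A.submatrix Fin.succ id * Yb * (A.submatrix Fin.succ id)ᵀ with hM
  have hent : ∀ i j : Fin N, M i j = Ys i.succ j.succ := by
    intro i j
    simp [hM, hYs, Matrix.mul_apply, Matrix.transpose_apply, Matrix.submatrix_apply]
  have hMv : M *ᵥ (fun i : Fin N => v i.succ n) = I := by
    funext i
    rw [← heq i]
    simp only [Matrix.mulVec, dotProduct]
    rw [Fin.sum_univ_succ, hslack, mul_zero, zero_add]
    exact Finset.sum_congr rfl fun j _ => by rw [hent i j]
  have hdet : IsUnit M.det := (Matrix.isUnit_iff_isUnit_det M).mp hinv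
  calc (fun i : Fin N => v i.succ n)
      = (M⁻¹ * M) *ᵥ (fun i : Fin N => v i.succ n) := by
        rw [Matrix.nonsing_inv_mul M hdet, Matrix.one_mulVec]
    _ = M⁻¹ *ᵥ I := by rw [← Matrix.mulVec_mulVec, hMv]
end

section
/- (Proposition 1, backward-forward sweep form / S-HELM) Let A be a complex (N+1)×N matrix each of whose columns sums to zero, partitioned into slack row a₀ᵀ and remaining N×N block Ã with Ã invertible, and let Y_b be an invertible N×N complex matrix; set Y^s = A·Y_b·Aᵀ. Fix n ≥ 1, complex numbers S_i, y^{sh}_i, v_i[n−1], w_i[n−1] for each non-slack node i, and let I ∈ ℂ^N have entries I_i = conj(S_i)·conj(w_i[n−1]) − y^{sh}_i·v_i[n−1]. Then a vector v[n] ∈ ℂ^{N+1} with slack entry v_0[n] = 0 satisfies Σ_{j=0}^{N} y^s_{ij}·v_j[n] = I_i for every non-slack i if and only if its non-slack part ṽ[n] satisfies ṽ[n] = (Y_b·Ãᵀ)⁻¹·I_b with I_b = Ã⁻¹·I; that is, the HELM coefficient equations at step n are solved by a single backward sweep (computing branch currents I_b from the injections I) followed by a single forward sweep (computing ṽ[n]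 from I_b). -/
/-! Because the slack entry of `v[n]` vanishes, the PQ rows of the HELM equations involve only the
PQ block of `Yˢ = A Y_b Aᵀ`, which is `Ã Y_b Ãᵀ`. This is a product of invertible factors, so the
system is solved by applying `Ã⁻¹` (the backward sweep to branch currents) and then
`(Y_b Ãᵀ)⁻¹` (the forward sweep to voltages). -/

open Matrix

namespace Matrix

variable {R : Type*} [CommRing R]

theorem mulVec_eq_iff_eq_nonsing_inv_mulVec {n : Type*} [Fintype n] [DecidableEq n]
    {M : Matrix n n R} (hM : IsUnit M) {x y : n → R} : M *ᵥ x = y ↔ x = M⁻¹ *ᵥ y := by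
  have hdet := (isUnit_iff_isUnit_det M).mp hM
  constructor
  · rintro rfl
    rw [mulVec_mulVec, nonsing_inv_mul M hdet, one_mulVec]
  · rintro rfl
    rw [mulVec_mulVec, mul_nonsing_inv M hdet, one_mulVec]

theorem submatrix_mul_mul_transpose {l m n : Type*} [Fintype m] [Fintype n] (A : Matrix m n R)
    (Y : Matrix n n R) (f : l → m) :
    (A * Y * Aᵀ).submatrix f f = A.submatrix f id * Y * (A.submatrix f id)ᵀ := by
  rw [submatrix_mul _ _ f id f Function.bijective_id,
    submatrix_mul _ _ f id id Function.bijective_id, submatrix_id_id, transpose_submatrix]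

theorem submatrix_succ_mulVec_of_head_eq_zero {N : ℕ} (M : Matrix (Fin (N + 1)) (Fin (N + 1)) R)
    {x : Fin (N + 1) → R} (hx : x 0 = 0) (i : Fin N) :
    (M.submatrix Fin.succ Fin.succ *ᵥ fun j => x j.succ) i = (M *ᵥ x) i.succ := by
  simp only [mulVec, dotProduct, Fin.sum_univ_succ, hx, mul_zero, zero_add,
    submatrix_apply]

end Matrix

theorem helm_step_solved_by_backward_forward_sweep_general (N : ℕ)
    (A : Matrix (Fin (N + 1)) (Fin N) ℂ) (Yb : Matrix (Fin N) (Fin N) ℂ)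
    (hAt : IsUnit (A.submatrix Fin.succ id)) (hYb : IsUnit Yb)
    (Ys : Matrix (Fin (N + 1)) (Fin (N + 1)) ℂ) (hYs : Ys = A * Yb * Aᵀ)
    (n : ℕ)
    (v : Fin (N + 1) → ℕ → ℂ)
    (I : Fin N → ℂ)
    (hslack : v 0 n = 0) :
    (∀ i : Fin N, ∑ j : Fin (N + 1), Ys i.succ j * v j n = I i) ↔
      (fun i : Fin N => v i.succ n) =
        (Yb * (A.submatrix Fin.succ id)ᵀ)⁻¹ *ᵥ ((A.submatrix Fin.succ id)⁻¹ *ᵥ I) := by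
  set At := A.submatrix Fin.succ id
  have hreduced : (∀ i : Fin N, ∑ j : Fin (N + 1), Ys i.succ j * v j n = I i) ↔
      (At * Yb * Atᵀ) *ᵥ (fun i => v i.succ n) = I := by
    rw [funext_iff, hYs, ← submatrix_mul_mul_transpose]
    exact forall_congr' fun i => by
      rw [submatrix_succ_mulVec_of_head_eq_zero (x := fun j => v j n) _ hslack]
      rfl
  rw [hreduced, mul_assoc, mulVec_eq_iff_eq_nonsing_inv_mulVec
    (hAt.mul (hYb.mul ((isUnit_transpose _).mpr hAt))), Matrix.mul_inv_rev, ← mulVec_mulVec]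

/-- Proposition 1, backward-forward sweep form / S-HELM: With `A` having
zero column sums, `Ã` and `Y_b` invertible, and `Y^s = A · Y_b · Aᵀ`, a vector `v[n]`
with slack entry `0` satisfies the HELM coefficient equations at step `n ≥ 1` with
right-hand side `I_i = conj(S_i)·conj(w_i[n-1]) - y^{sh}_i·v_i[n-1]` iff its non-slack
part equals `(Y_b · Ãᵀ)⁻¹ · I_b` with `I_b = Ã⁻¹ · I`: a single backward sweep followed
by a single forward sweep. -/
theorem helm_step_solved_by_backward_forward_sweep (N : ℕ)
    (A : Matrix (Fin (N + 1)) (Fin N) ℂ) (Yb : Matrix (Fin N) (Fin N) ℂ)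
    (hcol : ∀ j : Fin N, ∑ i : Fin (N + 1), A i j = 0)
    (hAt : IsUnit (A.submatrix Fin.succ id)) (hYb : IsUnit Yb)
    (Ys : Matrix (Fin (N + 1)) (Fin (N + 1)) ℂ) (hYs : Ys = A * Yb * Aᵀ)
    (n : ℕ) (hn : 1 ≤ n)
    (S ysh : Fin N → ℂ)
    (v : Fin (N + 1) → ℕ → ℂ) (w : Fin N → ℕ → ℂ)
    (I : Fin N → ℂ)
    (hI : ∀ i : Fin N,
      I i = (starRingEnd ℂ) (S i) * (starRingEnd ℂ) (w i (n - 1)) -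
        ysh i * v i.succ (n - 1))
    (hslack : v 0 n = 0) :
    (∀ i : Fin N, ∑ j : Fin (N + 1), Ys i.succ j * v j n = I i) ↔
      (fun i : Fin N => v i.succ n) =
        (Yb * (A.submatrix Fin.succ id)ᵀ)⁻¹ *ᵥ ((A.submatrix Fin.succ id)⁻¹ *ᵥ I) :=
  helm_step_solved_by_backward_forward_sweep_general N A Yb hAt hYb Ys hYs n v I hslack
end
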